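/- arXiv:1710.09606 — 3 statements merged into one kernel-verified Lean document; each statement's English description precedes it below -/
import Mathlib

section
/- Let 𝔽 be a division ring, n a positive integer, and let R be the free left 𝔽-module with basis the free monoid ℳ on the symbols x₁,…,xₙ. (i) Suppose a multiplication on R makes R a ring whose multiplicative identity is the empty word 1, which restricts to concatenation of words on ℳ, is additive on degrees (the degree of a product of two nonzero elements is the sum of their degrees, degree meaning the maximal word length in the support), and for which multiplication on the left by elements of 𝔽 (embedded as 𝔽·1) agrees with scalar multiplication. Then for each i and each a ∈ 𝔽 there are unique σ_{i,j}(a), δᵢ(a) ∈ 𝔽 with xᵢa = Σ_{j=1}^n σ_{i,j}(a)xⱼ + δᵢ(a); the map σ : 𝔽 → Mₙ(𝔽), a ↦ (σ_{i,j}(a)), is a unital ring homomorphism; and δ = (δ₁,…,δₙ)ᵀ : 𝔽 → 𝔽ⁿ is additive and satisfies δ(ab) = σ(a)δ(b) + δ(a)b for all a,b ∈ 𝔽. (ii) Conversely, for every unital ring homomorphism σ : 𝔽 → Mₙ(𝔽) and every additive map δ : 𝔽 → 𝔽ⁿ with δ(ab) = σ(a)δ(b) + δ(a)b for all a,b ∈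 𝔽, there exists exactly one multiplication on R with all the properties listed in (i) and satisfying xᵢa = Σ_{j=1}^n σ_{i,j}(a)xⱼ + δᵢ(a) for all i and all a ∈ 𝔽. -/
/- Common setup: free multivariate skew polynomial rings over a division ring. -/

open Matrix Finsupp

/-- The underlying left `𝔽`-module of the free multivariate skew polynomial ring:
the free left `𝔽`-module with basis the free monoid on `n` symbols. -/
abbrev SkewPoly (𝔽 : Type*) [DivisionRing 𝔽] (n : ℕ) : Type _ := FreeMonoid (Fin n) →₀ 𝔽

namespace SkewPoly

variable {𝔽 : Type*} [DivisionRing 𝔽] {n : ℕ}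

/-- The variable `xᵢ` as a skew polynomial. -/
noncomputable def X (𝔽 : Type*) [DivisionRing 𝔽] {n : ℕ} (i : Fin n) : SkewPoly 𝔽 n :=
  Finsupp.single (FreeMonoid.of i) 1

/-- The constant `a` as a skew polynomial (coefficient on the empty word). -/
noncomputable def C {𝔽 : Type*} [DivisionRing 𝔽] (n : ℕ) (a : 𝔽) :
    SkewPoly 𝔽 n := Finsupp.single 1 a

/-- The degree of a skew polynomial: the maximal length of a word in its support
(`⊥` for the zero polynomial). -/
noncomputable def deg (F : SkewPoly 𝔽 n) : WithBot ℕ :=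
  F.support.sup fun m => ((FreeMonoid.length m : ℕ) : WithBot ℕ)

/-- A matrix morphism `σ : 𝔽 → Mₙ(𝔽)`: a unital ring homomorphism. -/
def IsMatrixMorphism (σ : 𝔽 → Matrix (Fin n) (Fin n) 𝔽) : Prop :=
  σ 1 = 1 ∧ (∀ a b : 𝔽, σ (a + b) = σ a + σ b) ∧ (∀ a b : 𝔽, σ (a * b) = σ a * σ b)

/-- A `σ`-vector derivation `δ : 𝔽 → 𝔽ⁿ`: additive with `δ(ab) = σ(a)δ(b) + δ(a)b`. -/
def IsVectorDerivation (σ : 𝔽 → Matrix (Fin n) (Fin n) 𝔽) (δ : 𝔽 → Fin n → 𝔽) : Prop :=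
  (∀ a b : 𝔽, δ (a + b) = δ a + δ b) ∧
    (∀ a b : 𝔽, δ (a * b) = σ a *ᵥ δ b + fun i => δ a i * b)

/-- A multiplication on the free module `SkewPoly 𝔽 n` making it a ring (with the
existing addition) whose identity is the empty word, which restricts to concatenation
on monomials, is additive on degrees of nonzero elements, and for which left
multiplication by constants is scalar multiplication. -/
structure RawMul (𝔽 : Type*) [DivisionRing 𝔽] (n : ℕ) where
  /-- the multiplication -/
  mul : SkewPoly 𝔽 n → SkewPoly 𝔽 n → SkewPoly 𝔽 n
  mul_add : ∀ F G H : SkewPoly 𝔽 n, mul F (G + H) = mul F G + mul F H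
  add_mul : ∀ F G H : SkewPoly 𝔽 n, mul (F + G) H = mul F H + mul G H
  mul_assoc : ∀ F G H : SkewPoly 𝔽 n, mul (mul F G) H = mul F (mul G H)
  one_mul : ∀ F : SkewPoly 𝔽 n, mul (C n 1) F = F
  mul_one : ∀ F : SkewPoly 𝔽 n, mul F (C n 1) = F
  mono_mul_mono : ∀ m m' : FreeMonoid (Fin n),
    mul (Finsupp.single m 1) (Finsupp.single m' 1) = Finsupp.single (m * m') 1
  const_mul : ∀ (a : 𝔽) (F : SkewPoly 𝔽 n), mul (C n a) F = a • F
  deg_mul : ∀ F G : SkewPoly 𝔽 n, F ≠ 0 → G ≠ 0 → deg (mul F G) = deg F + deg G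

/-- The multiplication `S` satisfies the commutation rule
`xᵢ a = Σⱼ σ_{i,j}(a) xⱼ + δᵢ(a)`. -/
def HasCommRule (S : RawMul 𝔽 n) (σ : 𝔽 → Matrix (Fin n) (Fin n) 𝔽)
    (δ : 𝔽 → Fin n → 𝔽) : Prop :=
  ∀ (i : Fin n) (a : 𝔽),
    S.mul (X 𝔽 i) (C n a) =
      (∑ j : Fin n, Finsupp.single (FreeMonoid.of j) (σ a i j)) + C n (δ a i)

/-- `F = Σᵢ Gᵢ (xᵢ - aᵢ) + b`, i.e. `b` is a remainder of `F` upon right division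
by `x₁ - a₁, …, xₙ - aₙ`; equivalently `F - b` lies in the left ideal generated by
the `xᵢ - aᵢ`. -/
def Decomposes (S : RawMul 𝔽 n) (a : Fin n → 𝔽) (F : SkewPoly 𝔽 n) (b : 𝔽) : Prop :=
  ∃ G : Fin n → SkewPoly 𝔽 n,
    F = (∑ i : Fin n, S.mul (G i) (X 𝔽 i - C n (a i))) + C n b

/-- The evaluation of `F` at the point `a`: the unique `b ∈ 𝔽` such that `F - b`
lies in the left ideal generated by `x₁ - a₁, …, xₙ - aₙ`. -/
noncomputable def eval (S : RawMul 𝔽 n) (a : Fin n → 𝔽) (F : SkewPoly 𝔽 n) : 𝔽 :=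
  letI := Classical.propDecidable (∃ b : 𝔽, Decomposes S a F b)
  if h : ∃ b : 𝔽, Decomposes S a F b then h.choose else 0

/-- The `(σ,δ)`-conjugate `a^c = σ(c) a c⁻¹ + δ(c) c⁻¹` of `a` with respect to `c`. -/
noncomputable def conj (σ : 𝔽 → Matrix (Fin n) (Fin n) 𝔽) (δ : 𝔽 → Fin n → 𝔽)
    (a : Fin n → 𝔽) (c : 𝔽) : Fin n → 𝔽 :=
  fun i => (σ c *ᵥ a) i * c⁻¹ + δ c i * c⁻¹

/-- `I(Ω)`: the set of skew polynomials vanishing at every point of `Ω`. -/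
def zeroIdeal (S : RawMul 𝔽 n) (Ω : Set (Fin n → 𝔽)) : Set (SkewPoly 𝔽 n) :=
  {F | ∀ a ∈ Ω, eval S a F = 0}

/-- The left ideal of `SkewPoly 𝔽 n` generated by `x₁ - a₁, …, xₙ - aₙ`
(the set of sums of left multiples of the generators). -/
def pointIdeal (S : RawMul 𝔽 n) (a : Fin n → 𝔽) : Set (SkewPoly 𝔽 n) :=
  {F | ∃ G : Fin n → SkewPoly 𝔽 n, F = ∑ i : Fin n, S.mul (G i) (X 𝔽 i - C n (a i))}

/-- The P-closure `Ω̄ = Z(I(Ω))` of a set of points `Ω`. -/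
def pClosure (S : RawMul 𝔽 n) (Ω : Set (Fin n → 𝔽)) : Set (Fin n → 𝔽) :=
  {a | ∀ F ∈ zeroIdeal S Ω, eval S a F = 0}

/-- `Ω` is P-closed if it equals its P-closure. -/
def IsPClosed (S : RawMul 𝔽 n) (Ω : Set (Fin n → 𝔽)) : Prop := pClosure S Ω = Ω

/-- `B` is P-independent: no point of `B` lies in the P-closure of the rest. -/
def PIndep (S : RawMul 𝔽 n) (B : Set (Fin n → 𝔽)) : Prop :=
  ∀ a ∈ B, a ∉ pClosure S (B \ {a})

/-- `B` is a P-basis of `Ω`: a P-independent subset of `Ω` whose P-closure is `Ω`. -/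
def IsPBasis (S : RawMul 𝔽 n) (B Ω : Set (Fin n → 𝔽)) : Prop :=
  B ⊆ Ω ∧ PIndep S B ∧ pClosure S B = Ω

/-- `Ω` is finitely generated: it is the P-closure of a finite subset of itself. -/
def FinGen (S : RawMul 𝔽 n) (Ω : Set (Fin n → 𝔽)) : Prop :=
  ∃ G : Set (Fin n → 𝔽), G.Finite ∧ G ⊆ Ω ∧ pClosure S G = Ω

/-- The rank of a P-closed set: the (common) cardinality of its P-bases. -/
noncomputable def pRank (S : RawMul 𝔽 n) (Ω : Set (Fin n → 𝔽)) : ℕ :=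
  sInf {k : ℕ | ∃ B : Finset (Fin n → 𝔽), IsPBasis S ↑B Ω ∧ B.card = k}

/-- The image of the evaluation map `E_Ω : R → 𝔽^Ω`, as a left `𝔽`-subspace of `𝔽^Ω`
(the span of the image; the image is itself a subspace since evaluation is left linear). -/
noncomputable def evalSpan (S : RawMul 𝔽 n) (Ω : Set (Fin n → 𝔽)) :
    Submodule 𝔽 (↥Ω → 𝔽) :=
  Submodule.span 𝔽 (Set.range fun F : SkewPoly 𝔽 n => fun a : ↥Ω => eval S ↑a F)

/-- `I` is a two-sided ideal with respect to the multiplication `S`. -/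
def IsTwoSidedIdealSet (S : RawMul 𝔽 n) (I : Set (SkewPoly 𝔽 n)) : Prop :=
  (0 : SkewPoly 𝔽 n) ∈ I ∧ (∀ F ∈ I, ∀ G ∈ I, F + G ∈ I) ∧ (∀ F ∈ I, -F ∈ I) ∧
    (∀ F ∈ I, ∀ G : SkewPoly 𝔽 n, S.mul G F ∈ I) ∧
    (∀ F ∈ I, ∀ G : SkewPoly 𝔽 n, S.mul F G ∈ I)


/-- The left row-rank of the skew Vandermonde matrix `V_d(G)`: the dimension of the
left `𝔽`-span of its rows `(N_m(c))_{c ∈ G}`, indexed by the words `m` of length `< d`,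
where `N_m(c)` is the evaluation of the monomial `m` at the point `c`. -/
noncomputable def vandermondeRank (S : RawMul 𝔽 n) (G : Finset (Fin n → 𝔽)) (d : ℕ) :
    Cardinal :=
  Module.rank 𝔽 ↥(Submodule.span 𝔽 (Set.range
    fun m : {m : FreeMonoid (Fin n) // FreeMonoid.length m < d} =>
      fun c : ↥G => eval S ↑c (Finsupp.single (m : FreeMonoid (Fin n)) (1 : 𝔽))))

end SkewPoly

open SkewPoly

/-!
Degrees add, so `xᵢ a` has degree at most one and is `Σⱼ σᵢⱼ(a) xⱼ + δᵢ(a)` for unique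
coefficients; expanding `xᵢ (a + b)` and `xᵢ (ab) = (xᵢ a) b` gives the morphism and derivation
identities.

Conversely, the commutation rule forces left multiplication by `xᵢ` to be the additive map
`mulX σ δ i`, by a word `m` to be the composite `wordMul σ δ m` of these, and the product to be
`F G = Σₘ Fₘ (m G)`; this formula is associative because `mulX` obeys the commutation rule
with scalars. For degrees, let `d = deg F` and let `w` be a longest word of `G`: the
coefficients of `F G` at the words `p w` with `|p| = d` form the row vector of degree-`d`
coefficients of `F` times the matrix `sigmaPow σ d (G_w)` (`σ` applied `d` times, block
matrices flattened), which is invertible because `sigmaPow σ d` is a ring homomorphism.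
-/

theorem FreeMonoid.of_mul_eq_of_mul_iff {α : Type*} {i j : α} {m w : FreeMonoid α} :
    FreeMonoid.of i * m = FreeMonoid.of j * w ↔ i = j ∧ m = w := by
  rw [← FreeMonoid.toList.injective.eq_iff, FreeMonoid.toList_of_mul, FreeMonoid.toList_of_mul,
    List.cons_eq_cons, FreeMonoid.toList.injective.eq_iff]

namespace SkewPoly

variable {𝔽 : Type*} [DivisionRing 𝔽] {n : ℕ}

theorem deg_le_iff {F : SkewPoly 𝔽 n} {d : ℕ} : deg F ≤ d ↔ ∀ u, d < u.length → F u = 0 := by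
  simp only [deg, Finset.sup_le_iff, Finsupp.mem_support_iff, Nat.cast_le]
  exact forall_congr' fun u => by rw [not_imp_comm, not_le]

theorem length_le_deg {F : SkewPoly 𝔽 n} {u : FreeMonoid (Fin n)} (h : F u ≠ 0) :
    (u.length : WithBot ℕ) ≤ deg F :=
  Finset.le_sup (f := fun m => (m.length : WithBot ℕ)) (Finsupp.mem_support_iff.2 h)

theorem length_le_of_deg_le {F : SkewPoly 𝔽 n} {d : ℕ} (hF : deg F ≤ d)
    {u : FreeMonoid (Fin n)} (hu : F u ≠ 0) : u.length ≤ d :=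
  WithBot.coe_le_coe.1 ((length_le_deg hu).trans hF)

theorem exists_deg_eq_length {F : SkewPoly 𝔽 n} (hF : F ≠ 0) :
    ∃ u, F u ≠ 0 ∧ deg F = u.length := by
  obtain ⟨u, hu, h⟩ := Finset.exists_mem_eq_sup F.support (Finsupp.support_nonempty_iff.2 hF)
    fun m => (m.length : WithBot ℕ)
  exact ⟨u, Finsupp.mem_support_iff.1 hu, h⟩

theorem deg_single (m : FreeMonoid (Fin n)) {c : 𝔽} (hc : c ≠ 0) :
    deg (single m c : SkewPoly 𝔽 n) = m.length := by
  rw [deg, Finsupp.support_single m hc, Finset.sup_singleton]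

theorem single_eq_smul (m : FreeMonoid (Fin n)) (a : 𝔽) :
    single m a = a • (single m 1 : SkewPoly 𝔽 n) := by
  rw [Finsupp.smul_single', mul_one]

theorem C_add (a b : 𝔽) : C n (a + b) = C n a + C n b := Finsupp.single_add _ _ _

@[simp]
theorem C_apply_one (a : 𝔽) : C n a 1 = a := Finsupp.single_eq_same

@[simp]
theorem C_apply_of (a : 𝔽) (k : Fin n) : C n a (FreeMonoid.of k) = 0 :=
  Finsupp.single_eq_of_ne (FreeMonoid.one_ne_of k).symm

noncomputable def affine (c : Fin n → 𝔽) (e : 𝔽) : SkewPoly 𝔽 n :=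
  (∑ j, single (FreeMonoid.of j) (c j)) + C n e

theorem hasCommRule_iff {S : RawMul 𝔽 n} {σ : 𝔽 → Matrix (Fin n) (Fin n) 𝔽}
    {δ : 𝔽 → Fin n → 𝔽} :
    HasCommRule S σ δ ↔ ∀ i a, S.mul (X 𝔽 i) (C n a) = affine (σ a i) (δ a i) :=
  Iff.rfl

@[simp]
theorem affine_apply_of (c : Fin n → 𝔽) (e : 𝔽) (k : Fin n) :
    affine c e (FreeMonoid.of k) = c k := by
  classical
  simp [affine, Finsupp.single_apply, FreeMonoid.of_injective.eq_iff]

@[simp]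
theorem affine_apply_one (c : Fin n → 𝔽) (e : 𝔽) : affine c e 1 = e := by
  simp [affine]

theorem eq_affine_of_deg_le_one {F : SkewPoly 𝔽 n} (h : deg F ≤ (1 : ℕ)) :
    F = affine (fun j => F (FreeMonoid.of j)) (F 1) := by
  ext u
  induction u using FreeMonoid.casesOn with
  | one => rw [affine_apply_one]
  | of_mul i u =>
    induction u using FreeMonoid.casesOn with
    | one => rw [mul_one, affine_apply_of]
    | of_mul j w =>
      have hlen : 1 < (FreeMonoid.of i * (FreeMonoid.of j * w)).length := by
        simp only [FreeMonoid.length_mul, FreeMonoid.length_of]; omega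
      have hof : ∀ k, FreeMonoid.of k ≠ FreeMonoid.of i * (FreeMonoid.of j * w) :=
        fun k h => by simp [← h] at hlen
      simp [deg_le_iff.1 h _ hlen, affine, C, hof]

namespace RawMul

variable (S : RawMul 𝔽 n)

noncomputable def mulLeft (F : SkewPoly 𝔽 n) : SkewPoly 𝔽 n →+ SkewPoly 𝔽 n :=
  AddMonoidHom.mk' (S.mul F) (S.mul_add F)

noncomputable def mulRight (G : SkewPoly 𝔽 n) : SkewPoly 𝔽 n →+ SkewPoly 𝔽 n :=
  AddMonoidHom.mk' (S.mul · G) (S.add_mul · · G)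

theorem mul_zero (F : SkewPoly 𝔽 n) : S.mul F 0 = 0 := (S.mulLeft F).map_zero

theorem zero_mul (G : SkewPoly 𝔽 n) : S.mul 0 G = 0 := (S.mulRight G).map_zero

theorem sum_mul {ι : Type*} (s : Finset ι) (f : ι → SkewPoly 𝔽 n) (G : SkewPoly 𝔽 n) :
    S.mul (∑ j ∈ s, f j) G = ∑ j ∈ s, S.mul (f j) G :=
  map_sum (S.mulRight G) f s

theorem smul_mul (a : 𝔽) (F G : SkewPoly 𝔽 n) : S.mul (a • F) G = a • S.mul F G := by
  rw [← S.const_mul, S.mul_assoc, S.const_mul]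

theorem single_mul_single_one (m m' : FreeMonoid (Fin n)) (a : 𝔽) :
    S.mul (single m a) (single m' 1) = single (m * m') a := by
  rw [single_eq_smul, S.smul_mul, S.mono_mul_mono, ← single_eq_smul]

theorem C_mul_C (a b : 𝔽) : S.mul (C n a) (C n b) = C n (a * b) := by
  rw [S.const_mul, C, C, Finsupp.smul_single']

noncomputable def sigma (a : 𝔽) : Matrix (Fin n) (Fin n) 𝔽 :=
  Matrix.of fun i j => S.mul (X 𝔽 i) (C n a) (FreeMonoid.of j)

noncomputable def delta (a : 𝔽) : Fin n → 𝔽 := fun i => S.mul (X 𝔽 i) (C n a) 1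

theorem deg_mul_X_C_le (i : Fin n) (a : 𝔽) : deg (S.mul (X 𝔽 i) (C n a)) ≤ (1 : ℕ) := by
  by_cases ha : a = 0
  · rw [ha, C, Finsupp.single_zero, S.mul_zero, deg, Finsupp.support_zero, Finset.sup_empty]
    exact bot_le
  · rw [S.deg_mul (X 𝔽 i) (C n a) (Finsupp.single_ne_zero.2 one_ne_zero)
      (Finsupp.single_ne_zero.2 ha), X, C, deg_single _ one_ne_zero, deg_single _ ha]
    simp

theorem hasCommRule : HasCommRule S S.sigma S.delta := fun i a =>
  eq_affine_of_deg_le_one (S.deg_mul_X_C_le i a)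

theorem eq_of_hasCommRule {σ : 𝔽 → Matrix (Fin n) (Fin n) 𝔽} {δ : 𝔽 → Fin n → 𝔽}
    (h : HasCommRule S σ δ) : σ = S.sigma ∧ δ = S.delta := by
  refine ⟨funext fun a => Matrix.ext fun i j => ?_, funext fun a => funext fun i => ?_⟩
  · simp [sigma, hasCommRule_iff.1 h]
  · simp [delta, hasCommRule_iff.1 h]

theorem mul_X_C_mul (i : Fin n) (a b : 𝔽) :
    S.mul (X 𝔽 i) (C n (a * b)) =
      (∑ j, S.sigma a i j • S.mul (X 𝔽 j) (C n b)) + C n (S.delta a i * b) := by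
  rw [← S.C_mul_C, ← S.mul_assoc, S.hasCommRule i a, S.add_mul, S.sum_mul, S.C_mul_C]
  congr 1
  refine Finset.sum_congr rfl fun j _ => ?_
  rw [single_eq_smul, S.smul_mul]
  rfl

theorem isMatrixMorphism_sigma : IsMatrixMorphism S.sigma := by
  classical
  refine ⟨Matrix.ext fun i j => ?_, fun a b => Matrix.ext fun i j => ?_,
    fun a b => Matrix.ext fun i j => ?_⟩
  · simp [sigma, S.mul_one, X, Finsupp.single_apply, Matrix.one_apply,
      FreeMonoid.of_injective.eq_iff]
  · simp [sigma, C_add, S.mul_add]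
  · simp [sigma, S.mul_X_C_mul, Matrix.mul_apply]

theorem isVectorDerivation_delta : IsVectorDerivation S.sigma S.delta := by
  refine ⟨fun a b => funext fun i => ?_, fun a b => funext fun i => ?_⟩
  · simp [delta, C_add, S.mul_add]
  · simp [delta, S.mul_X_C_mul, Matrix.mulVec, dotProduct]

theorem ext {S S' : RawMul 𝔽 n} (h : S.mul = S'.mul) : S = S' := by
  cases S
  cases S'
  cases h
  rfl

end RawMul

/-- Words of length `d` over `Fin n`, as iterated products so that the block matrices of
`sigmaPow` need no reindexing. -/
def Words (n : ℕ) : ℕ → Type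
  | 0 => Unit
  | d + 1 => Words n d × Fin n

namespace Words

instance instFintype (n : ℕ) : (d : ℕ) → Fintype (Words n d)
  | 0 => inferInstanceAs (Fintype Unit)
  | d + 1 => letI := instFintype n d; inferInstanceAs (Fintype (Words n d × Fin n))

instance instDecidableEq (n : ℕ) : (d : ℕ) → DecidableEq (Words n d)
  | 0 => inferInstanceAs (DecidableEq Unit)
  | d + 1 => letI := instDecidableEq n d; inferInstanceAs (DecidableEq (Words n d × Fin n))

def toFreeMonoid {n : ℕ} : {d : ℕ} → Words n d → FreeMonoid (Fin n)
  | 0, _ => 1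
  | _ + 1, (x, i) => FreeMonoid.of i * toFreeMonoid x

theorem length_toFreeMonoid {n : ℕ} : {d : ℕ} → (x : Words n d) → x.toFreeMonoid.length = d
  | 0, _ => rfl
  | d + 1, (x, i) => by
    rw [toFreeMonoid, FreeMonoid.length_mul, length_toFreeMonoid x, FreeMonoid.length_of, add_comm]

theorem toFreeMonoid_injective {n : ℕ} : {d : ℕ} → Function.Injective (@toFreeMonoid n d)
  | 0, _, _, _ => rfl
  | d + 1, (x, i), (y, j), h => by
    obtain ⟨rfl, hxy⟩ := FreeMonoid.of_mul_eq_of_mul_iff.1 h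
    rw [toFreeMonoid_injective hxy]

theorem exists_toFreeMonoid_eq {n : ℕ} : {d : ℕ} → {m : FreeMonoid (Fin n)} → m.length = d →
    ∃ x : Words n d, x.toFreeMonoid = m
  | 0, m, h => ⟨(), (FreeMonoid.length_eq_zero.1 h).symm⟩
  | d + 1, m, h => by
    induction m using FreeMonoid.casesOn with
    | one => simp at h
    | of_mul i m =>
      obtain ⟨x, hx⟩ := exists_toFreeMonoid_eq (d := d) (m := m) (by simp at h; omega)
      exact ⟨(x, i), by rw [toFreeMonoid, hx]⟩

end Words

section SigmaPow

variable (σ : 𝔽 →+* Matrix (Fin n) (Fin n) 𝔽)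

noncomputable def sigmaPow : (d : ℕ) → 𝔽 →+* Matrix (Words n d) (Words n d) 𝔽
  | 0 => Matrix.scalar (Words n 0)
  | d + 1 => (Matrix.compRingEquiv (Words n d) (Fin n) 𝔽).toRingHom.comp
      (σ.mapMatrix.comp (sigmaPow d))

theorem sigmaPow_zero_apply (c : 𝔽) (x y : Words n 0) : sigmaPow σ 0 c x y = c := rfl

theorem sigmaPow_succ_apply (d : ℕ) (c : 𝔽) (x y : Words n d) (i j : Fin n) :
    sigmaPow σ (d + 1) c (x, i) (y, j) = σ (sigmaPow σ d c x y) i j := rfl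

theorem isUnit_sigmaPow (d : ℕ) {c : 𝔽} (hc : c ≠ 0) : IsUnit (sigmaPow σ d c) :=
  (Ne.isUnit hc).map _

end SigmaPow

def IsMatrixMorphism.toRingHom {σ : 𝔽 → Matrix (Fin n) (Fin n) 𝔽} (hσ : IsMatrixMorphism σ) :
    𝔽 →+* Matrix (Fin n) (Fin n) 𝔽 :=
  RingHom.mk' ⟨⟨σ, hσ.1⟩, hσ.2.2⟩ hσ.2.1

def IsVectorDerivation.toAddMonoidHom {σ : 𝔽 → Matrix (Fin n) (Fin n) 𝔽} {δ : 𝔽 → Fin n → 𝔽}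
    (hδ : IsVectorDerivation σ δ) : 𝔽 →+ Fin n → 𝔽 :=
  AddMonoidHom.mk' δ hδ.1

theorem IsVectorDerivation.map_one_eq_zero {σ : 𝔽 →+* Matrix (Fin n) (Fin n) 𝔽}
    {δ : 𝔽 →+ Fin n → 𝔽} (hδ : IsVectorDerivation σ δ) : δ 1 = 0 := by
  simpa using hδ.2 1 1

section Construction

variable (σ : 𝔽 →+* Matrix (Fin n) (Fin n) 𝔽) (δ : 𝔽 →+ Fin n → 𝔽)

noncomputable def mulX (i : Fin n) : AddMonoid.End (SkewPoly 𝔽 n) :=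
  Finsupp.liftAddHom fun m => AddMonoidHom.mk'
    (fun b => (∑ j, single (FreeMonoid.of j * m) (σ b i j)) + single m (δ b i))
    (fun b b' => by
      simp only [map_add, Matrix.add_apply, Pi.add_apply, Finsupp.single_add,
        Finset.sum_add_distrib]
      abel)

noncomputable def wordMul : FreeMonoid (Fin n) →* AddMonoid.End (SkewPoly 𝔽 n) :=
  FreeMonoid.lift (mulX σ δ)

noncomputable def skewMul : SkewPoly 𝔽 n →+ SkewPoly 𝔽 n →+ SkewPoly 𝔽 n :=
  Finsupp.liftAddHom fun m => (smulAddHom 𝔽 (SkewPoly 𝔽 n →+ SkewPoly 𝔽 n)).flip (wordMul σ δ m)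

variable {σ δ}

theorem mulX_single (i : Fin n) (m : FreeMonoid (Fin n)) (b : 𝔽) :
    mulX σ δ i (single m b) = (∑ j, single (FreeMonoid.of j * m) (σ b i j)) + single m (δ b i) :=
  Finsupp.liftAddHom_apply_single _ _ _

theorem wordMul_one (G : SkewPoly 𝔽 n) : wordMul σ δ 1 G = G := by
  rw [map_one]; rfl

theorem wordMul_of_mul (i : Fin n) (m : FreeMonoid (Fin n)) (G : SkewPoly 𝔽 n) :
    wordMul σ δ (FreeMonoid.of i * m) G = mulX σ δ i (wordMul σ δ m G) := by
  rw [map_mul, wordMul, FreeMonoid.lift_eval_of]; rfl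

theorem skewMul_single (m : FreeMonoid (Fin n)) (a : 𝔽) (G : SkewPoly 𝔽 n) :
    skewMul σ δ (single m a) G = a • wordMul σ δ m G := by
  rw [skewMul, Finsupp.liftAddHom_apply_single]; rfl

theorem skewMul_apply (F G : SkewPoly 𝔽 n) (u : FreeMonoid (Fin n)) :
    skewMul σ δ F G u = F.sum fun m a => a * wordMul σ δ m G u := by
  rw [← F.sum_single, map_finsuppSum]
  simp [skewMul_single, Finsupp.sum_apply]

theorem skewMul_smul (a : 𝔽) (F G : SkewPoly 𝔽 n) :
    skewMul σ δ (a • F) G = a • skewMul σ δ F G := by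
  induction F using Finsupp.induction_linear with
  | zero => simp
  | add F F' hF hF' => rw [smul_add, map_add, map_add, AddMonoidHom.add_apply,
      AddMonoidHom.add_apply, hF, hF', smul_add]
  | single m b => rw [Finsupp.smul_single', skewMul_single, skewMul_single, mul_smul]

theorem mulX_smul (hδ : IsVectorDerivation σ δ) (i : Fin n) (b : 𝔽) (K : SkewPoly 𝔽 n) :
    mulX σ δ i (b • K) = (∑ j, σ b i j • mulX σ δ j K) + δ b i • K := by
  induction K using Finsupp.induction_linear with
  | zero => simp
  | add K K' hK hK' =>
    simp only [smul_add, map_add, hK, hK', Finset.sum_add_distrib]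
    abel
  | single m c =>
    simp only [Finsupp.smul_single', mulX_single, smul_add, Finset.smul_sum, map_mul,
      Matrix.mul_apply, hδ.2, Pi.add_apply, Matrix.mulVec, dotProduct, Finsupp.single_add,
      ← Finsupp.single_finsetSum, Finset.sum_add_distrib]
    rw [Finset.sum_comm]
    simp only [← Finsupp.single_finsetSum]
    abel

theorem mulX_skewMul (hδ : IsVectorDerivation σ δ) (i : Fin n) (F G : SkewPoly 𝔽 n) :
    mulX σ δ i (skewMul σ δ F G) = skewMul σ δ (mulX σ δ i F) G := by
  induction F using Finsupp.induction_linear with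
  | zero => simp
  | add F F' hF hF' => simp only [map_add, AddMonoidHom.add_apply, hF, hF']
  | single m c =>
    simp only [skewMul_single, mulX_smul hδ, mulX_single, map_add, map_sum,
      AddMonoidHom.add_apply, AddMonoidHom.finsetSum_apply, wordMul_of_mul]

theorem wordMul_skewMul (hδ : IsVectorDerivation σ δ) (m : FreeMonoid (Fin n))
    (F G : SkewPoly 𝔽 n) :
    wordMul σ δ m (skewMul σ δ F G) = skewMul σ δ (wordMul σ δ m F) G := by
  induction m using FreeMonoid.inductionOn' with
  | one => simp only [wordMul_one]
  | of_mul i m ih => rw [wordMul_of_mul, ih, mulX_skewMul hδ, wordMul_of_mul]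

theorem skewMul_assoc (hδ : IsVectorDerivation σ δ) (F G H : SkewPoly 𝔽 n) :
    skewMul σ δ (skewMul σ δ F G) H = skewMul σ δ F (skewMul σ δ G H) := by
  induction F using Finsupp.induction_linear with
  | zero => simp
  | add F F' hF hF' => simp only [map_add, AddMonoidHom.add_apply, hF, hF']
  | single m c => rw [skewMul_single, skewMul_single, skewMul_smul, wordMul_skewMul hδ]

theorem wordMul_single_one (hδ : IsVectorDerivation σ δ) (m m' : FreeMonoid (Fin n)) :
    wordMul σ δ m (single m' 1) = single (m * m') 1 := by
  induction m using FreeMonoid.inductionOn' with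
  | one => rw [wordMul_one, one_mul]
  | of_mul i m ih =>
    rw [wordMul_of_mul, ih, mulX_single, map_one, hδ.map_one_eq_zero,
      Finset.sum_eq_single i (fun j _ hj => by simp [Ne.symm hj]) (by simp)]
    simp [mul_assoc]

theorem skewMul_C (a : 𝔽) (F : SkewPoly 𝔽 n) : skewMul σ δ (C n a) F = a • F := by
  rw [C, skewMul_single, wordMul_one]

theorem skewMul_C_one_right (hδ : IsVectorDerivation σ δ) (F : SkewPoly 𝔽 n) :
    skewMul σ δ F (C n 1) = F := by
  induction F using Finsupp.induction_linear with
  | zero => simp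
  | add F F' hF hF' => simp only [map_add, AddMonoidHom.add_apply, hF, hF']
  | single m c => rw [skewMul_single, C, wordMul_single_one hδ, mul_one, ← single_eq_smul]

theorem skewMul_single_one (hδ : IsVectorDerivation σ δ) (m m' : FreeMonoid (Fin n)) :
    skewMul σ δ (single m 1) (single m' 1) = single (m * m') 1 := by
  rw [skewMul_single, wordMul_single_one hδ, one_smul]

theorem skewMul_X_C (i : Fin n) (a : 𝔽) :
    skewMul σ δ (X 𝔽 i) (C n a) = affine (σ a i) (δ a i) := by
  rw [X, skewMul_single, one_smul, ← mul_one (FreeMonoid.of i), wordMul_of_mul, wordMul_one, C,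
    mulX_single]
  simp [affine, C]

theorem mulX_apply_of_mul (i j : Fin n) (K : SkewPoly 𝔽 n) (w : FreeMonoid (Fin n)) :
    mulX σ δ i K (FreeMonoid.of j * w) = σ (K w) i j + δ (K (FreeMonoid.of j * w)) i := by
  classical
  induction K using Finsupp.induction_linear with
  | zero => simp
  | add K K' hK hK' =>
    simp only [map_add, Finsupp.add_apply, hK, hK', Matrix.add_apply, Pi.add_apply]
    abel
  | single m b =>
    rw [mulX_single]
    by_cases hm : m = w
    · subst hm
      simp [Finsupp.single_apply, FreeMonoid.of_injective.eq_iff]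
    · simp [Finsupp.single_apply, FreeMonoid.of_mul_eq_of_mul_iff, hm]
      split_ifs <;> simp

theorem deg_mulX_le (i : Fin n) {K : SkewPoly 𝔽 n} {e : ℕ} (hK : deg K ≤ e) :
    deg (mulX σ δ i K) ≤ (e + 1 : ℕ) := by
  rw [deg_le_iff] at hK ⊢
  intro u hu
  induction u using FreeMonoid.casesOn with
  | one => simp at hu
  | of_mul j w =>
    rw [FreeMonoid.length_mul, FreeMonoid.length_of] at hu
    rw [mulX_apply_of_mul, hK w (by omega), hK _ (by simp; omega), map_zero, map_zero]
    simp

theorem deg_wordMul_le (m : FreeMonoid (Fin n)) {K : SkewPoly 𝔽 n} {e : ℕ} (hK : deg K ≤ e) :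
    deg (wordMul σ δ m K) ≤ (m.length + e : ℕ) := by
  induction m using FreeMonoid.inductionOn' with
  | one => simpa [wordMul_one] using hK
  | of_mul i m ih =>
    rw [wordMul_of_mul, FreeMonoid.length_mul, FreeMonoid.length_of]
    convert deg_mulX_le i ih using 2
    omega

theorem deg_skewMul_le {F G : SkewPoly 𝔽 n} {d e : ℕ} (hF : deg F ≤ d) (hG : deg G ≤ e) :
    deg (skewMul σ δ F G) ≤ (d + e : ℕ) := by
  refine deg_le_iff.2 fun u hu => ?_
  rw [skewMul_apply]
  refine Finset.sum_eq_zero fun m hm => ?_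
  have hmd := length_le_of_deg_le hF (Finsupp.mem_support_iff.1 hm)
  simp only [deg_le_iff.1 (deg_wordMul_le m hG) u (by omega), mul_zero]

theorem wordMul_toFreeMonoid_apply {K : SkewPoly 𝔽 n} {w : FreeMonoid (Fin n)}
    (hK : deg K ≤ w.length) : {d : ℕ} → (x y : Words n d) →
    wordMul σ δ x.toFreeMonoid K (y.toFreeMonoid * w) = sigmaPow σ d (K w) x y
  | 0, _, _ => by simp [Words.toFreeMonoid, sigmaPow_zero_apply]
  | d + 1, (x, i), (y, j) => by
    have hlow : wordMul σ δ x.toFreeMonoid K (FreeMonoid.of j * (y.toFreeMonoid * w)) = 0 := by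
      refine deg_le_iff.1 (deg_wordMul_le _ hK) _ ?_
      simp [Words.length_toFreeMonoid]
    rw [Words.toFreeMonoid, Words.toFreeMonoid, wordMul_of_mul, mul_assoc, mulX_apply_of_mul, hlow,
      wordMul_toFreeMonoid_apply hK x y, map_zero, Pi.zero_apply, add_zero, sigmaPow_succ_apply]

theorem skewMul_apply_toFreeMonoid_mul {d : ℕ} {F G : SkewPoly 𝔽 n} {w : FreeMonoid (Fin n)}
    (hF : deg F ≤ d) (hG : deg G ≤ w.length) (y : Words n d) :
    skewMul σ δ F G (y.toFreeMonoid * w) =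
      ((fun x => F x.toFreeMonoid) ᵥ* sigmaPow σ d (G w)) y := by
  classical
  have hterm : ∀ m ∈ F.support, F m * wordMul σ δ m G (y.toFreeMonoid * w) =
      ∑ x : Words n d, Finsupp.single m (F m) x.toFreeMonoid * sigmaPow σ d (G w) x y := by
    intro m hm
    rcases (length_le_of_deg_le hF (Finsupp.mem_support_iff.1 hm)).lt_or_eq with hlt | hd
    · have hW : wordMul σ δ m G (y.toFreeMonoid * w) = 0 := by
        refine deg_le_iff.1 (deg_wordMul_le m hG) _ ?_
        simp [Words.length_toFreeMonoid, hlt]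
      rw [hW, mul_zero]
      refine (Finset.sum_eq_zero fun x _ => ?_).symm
      rw [Finsupp.single_eq_of_ne, zero_mul]
      intro h
      simp [← h, Words.length_toFreeMonoid] at hlt
    · obtain ⟨x₀, rfl⟩ := Words.exists_toFreeMonoid_eq hd
      rw [wordMul_toFreeMonoid_apply hG, Finset.sum_eq_single x₀ (fun x _ hx => ?_) (by simp),
        Finsupp.single_eq_same]
      rw [Finsupp.single_eq_of_ne (Words.toFreeMonoid_injective.ne hx), zero_mul]
  calc skewMul σ δ F G (y.toFreeMonoid * w)
      = ∑ m ∈ F.support, ∑ x : Words n d,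
          Finsupp.single m (F m) x.toFreeMonoid * sigmaPow σ d (G w) x y := by
        rw [skewMul_apply]
        exact Finset.sum_congr rfl hterm
    _ = ∑ x : Words n d, (F.sum Finsupp.single) x.toFreeMonoid * sigmaPow σ d (G w) x y := by
        rw [Finset.sum_comm]
        simp only [Finsupp.sum, Finsupp.finsetSum_apply, Finset.sum_mul]
    _ = ((fun x => F x.toFreeMonoid) ᵥ* sigmaPow σ d (G w)) y := by
        rw [Finsupp.sum_single]
        rfl

theorem deg_skewMul {F G : SkewPoly 𝔽 n} (hF : F ≠ 0) (hG : G ≠ 0) :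
    deg (skewMul σ δ F G) = deg F + deg G := by
  obtain ⟨m, hm, hdF⟩ := exists_deg_eq_length hF
  obtain ⟨w, hw, hdG⟩ := exists_deg_eq_length hG
  generalize hd : m.length = d at hdF
  obtain ⟨x, rfl⟩ := Words.exists_toFreeMonoid_eq hd
  have hv : (fun x => F x.toFreeMonoid) ᵥ* sigmaPow σ d (G w) ≠ 0 := fun h =>
    hm (congrFun (Matrix.vecMul_injective_of_isUnit (isUnit_sigmaPow σ d hw)
      (h.trans (Matrix.zero_vecMul _).symm)) x)
  obtain ⟨y, hy⟩ := Function.ne_iff.1 hv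
  rw [← skewMul_apply_toFreeMonoid_mul hdF.le hdG.le] at hy
  refine le_antisymm (hdF ▸ hdG ▸ deg_skewMul_le hdF.le hdG.le) ?_
  simpa [hdF, hdG, Words.length_toFreeMonoid] using length_le_deg hy

noncomputable def skewRawMul (hδ : IsVectorDerivation σ δ) : RawMul 𝔽 n where
  mul F G := skewMul σ δ F G
  mul_add F := (skewMul σ δ F).map_add
  add_mul F F' G := by rw [map_add, AddMonoidHom.add_apply]
  mul_assoc := skewMul_assoc hδ
  one_mul F := by rw [skewMul_C, one_smul]
  mul_one := skewMul_C_one_right hδ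
  mono_mul_mono := skewMul_single_one hδ
  const_mul := skewMul_C
  deg_mul _ _ := deg_skewMul

theorem RawMul.mul_X_single {S : RawMul 𝔽 n} (hS : HasCommRule S σ δ) (i : Fin n)
    (m : FreeMonoid (Fin n)) (b : 𝔽) :
    S.mul (X 𝔽 i) (single m b) = mulX σ δ i (single m b) := by
  rw [show S.mul (X 𝔽 i) (single m b) = S.mul (S.mul (X 𝔽 i) (C n b)) (single m 1) by
    rw [S.mul_assoc, S.const_mul, ← single_eq_smul], hS, S.add_mul, S.sum_mul, C, mulX_single]
  simp only [S.single_mul_single_one, _root_.one_mul]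

theorem RawMul.mul_eq_skewMul {S : RawMul 𝔽 n} (hS : HasCommRule S σ δ) (F G : SkewPoly 𝔽 n) :
    S.mul F G = skewMul σ δ F G := by
  have hX : ∀ i, S.mulLeft (X 𝔽 i) = mulX σ δ i := fun i =>
    Finsupp.addHom_ext (S.mul_X_single hS i)
  have hW : ∀ m G, S.mul (single m 1) G = wordMul σ δ m G := by
    intro m
    induction m using FreeMonoid.inductionOn' with
    | one => exact fun G => by rw [wordMul_one]; exact S.one_mul G
    | of_mul i m ih =>
      intro G
      rw [← S.mono_mul_mono, S.mul_assoc, ih, wordMul_of_mul, ← hX]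
      rfl
  induction F using Finsupp.induction_linear with
  | zero => rw [S.zero_mul, map_zero, AddMonoidHom.zero_apply]
  | add F F' hF hF' => rw [S.add_mul, hF, hF', map_add, AddMonoidHom.add_apply]
  | single m a => rw [single_eq_smul, S.smul_mul, hW, skewMul_smul, skewMul_single, one_smul]

end Construction

end SkewPoly

theorem stmt0_general {𝔽 : Type*} [DivisionRing 𝔽] {n : ℕ} :
    (∀ S : RawMul 𝔽 n,
      (∃! p : (𝔽 → Matrix (Fin n) (Fin n) 𝔽) × (𝔽 → Fin n → 𝔽), HasCommRule S p.1 p.2) ∧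
      (∀ (σ : 𝔽 → Matrix (Fin n) (Fin n) 𝔽) (δ : 𝔽 → Fin n → 𝔽),
        HasCommRule S σ δ → IsMatrixMorphism σ ∧ IsVectorDerivation σ δ)) ∧
    (∀ (σ : 𝔽 → Matrix (Fin n) (Fin n) 𝔽) (δ : 𝔽 → Fin n → 𝔽),
      IsMatrixMorphism σ → IsVectorDerivation σ δ →
        ∃! S : RawMul 𝔽 n, HasCommRule S σ δ) := by
  refine ⟨fun S => ⟨⟨(S.sigma, S.delta), S.hasCommRule, fun p hp => ?_⟩, fun σ δ h => ?_⟩,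
    fun σ δ hσ hδ => ?_⟩
  · exact Prod.ext (S.eq_of_hasCommRule hp).1 (S.eq_of_hasCommRule hp).2
  · obtain ⟨rfl, rfl⟩ := S.eq_of_hasCommRule h
    exact ⟨S.isMatrixMorphism_sigma, S.isVectorDerivation_delta⟩
  · let σ' := hσ.toRingHom
    let δ' := hδ.toAddMonoidHom
    refine ⟨skewRawMul (σ := σ') (δ := δ') hδ, skewMul_X_C, fun S hS => ?_⟩
    exact RawMul.ext (funext₂ (S.mul_eq_skewMul (σ := σ') (δ := δ') hS))

/-- (i) Any ring multiplication on the free module with the stated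
properties determines a unique pair `(σ, δ)` via `xᵢ a = Σⱼ σ_{i,j}(a) xⱼ + δᵢ(a)`, and
this `σ` is a matrix morphism and `δ` a `σ`-vector derivation. (ii) Conversely, every
matrix morphism `σ` and `σ`-vector derivation `δ` arise from exactly one such
multiplication. -/
theorem stmt0 {𝔽 : Type*} [DivisionRing 𝔽] {n : ℕ} (hn : 0 < n) :
    (∀ S : RawMul 𝔽 n,
      (∃! p : (𝔽 → Matrix (Fin n) (Fin n) 𝔽) × (𝔽 → Fin n → 𝔽), HasCommRule S p.1 p.2) ∧
      (∀ (σ : 𝔽 → Matrix (Fin n) (Fin n) 𝔽) (δ : 𝔽 → Fin n → 𝔽),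
        HasCommRule S σ δ → IsMatrixMorphism σ ∧ IsVectorDerivation σ δ)) ∧
    (∀ (σ : 𝔽 → Matrix (Fin n) (Fin n) 𝔽) (δ : 𝔽 → Fin n → 𝔽),
      IsMatrixMorphism σ → IsVectorDerivation σ δ →
        ∃! S : RawMul 𝔽 n, HasCommRule S σ δ) :=
  stmt0_general
end

section
/- Let B ⊆ Ω ⊆ 𝔽ⁿ with Ω = B̄. Then: (i) B is a P-basis of Ω if and only if B is a minimal set of P-generators of Ω, i.e., whenever G ⊆ B satisfies Ḡ = Ω, then G = B; (ii) if B is finite, these are further equivalent to: for every ordering b₁, b₂, …, b_M of the elements of B and every i = 0, 1, …, M−1, the point b_{i+1} does not lie in the P-closure of {b₁,…,bᵢ} (where the empty set has P-closure Z(I(∅))). -/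
/- Common setup: free multivariate skew polynomial rings over a division ring. -/

open Matrix Finsupp

open SkewPoly

/-!
`Ω ↦ Ω̄ = Z(I(Ω))` is a closure operator on sets of points (it is the closure of the antitone
Galois connection between `Z` and `I`). Both parts of the theorem hold for the independent sets
of an arbitrary closure operator: a point of `B` lying in the closure of the rest of `B` can be
dropped without changing the closure, and conversely a proper generating subset misses some
`b ∈ B`, which then lies in the closure of `B ∖ {b}`. For (ii), the elements preceding `bᵢ₊₁`
in an ordering form a subset of `B ∖ {bᵢ₊₁}`, and an ordering listing a given `b` last
recovers `B ∖ {b}` as its initial segment.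
-/

theorem List.Nodup.getElem_notMem_take {α : Type*} {l : List α} (hl : l.Nodup) {i : ℕ}
    (hi : i < l.length) : l[i] ∉ l.take i := by
  rw [← List.take_append_drop i l, List.nodup_append] at hl
  exact fun h => hl.2.2 _ h _ (by rw [List.drop_eq_getElem_cons hi]; exact List.mem_cons_self) rfl

namespace ClosureOperator

variable {α : Type*} (c : ClosureOperator (Set α))

theorem forall_notMem_closure_diff_iff_forall_subset {B : Set α} :
    (∀ a ∈ B, a ∉ c (B \ {a})) ↔ ∀ G ⊆ B, c G = c B → G = B := by
  constructor
  · intro hind G hGB hcl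
    refine hGB.antisymm fun b hb => by_contra fun hbG => hind b hb ?_
    have hGsub : G ⊆ B \ {b} := fun x hx => ⟨hGB hx, fun h => hbG (h ▸ hx)⟩
    exact c.monotone hGsub (hcl ▸ c.le_closure B hb)
  · intro hmin a ha hacl
    have hB : B ⊆ c (B \ {a}) :=
      (Set.subset_insert_sdiff_singleton a B).trans (Set.insert_subset hacl (c.le_closure _))
    have hcl : c (B \ {a}) = c B :=
      (c.monotone Set.sdiff_subset).antisymm (c.le_closure_iff.mp hB)
    exact (hmin _ Set.sdiff_subset hcl ▸ ha).2 rfl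

theorem forall_notMem_closure_diff_iff_forall_list {B : Set α} (hB : B.Finite) :
    (∀ a ∈ B, a ∉ c (B \ {a})) ↔ ∀ l : List α, l.Nodup → {x | x ∈ l} = B →
      ∀ i : Fin l.length, l.get i ∉ c {x | x ∈ l.take i.1} := by
  constructor
  · rintro hind l hl rfl i hcl
    have htake : {x | x ∈ l.take i.1} ⊆ {x | x ∈ l} \ {l.get i} := fun x hx =>
      ⟨List.mem_of_mem_take hx, by rintro rfl; exact hl.getElem_notMem_take i.2 hx⟩
    exact hind _ (l.get_mem i) (c.monotone htake hcl)
  · intro hlist a ha hacl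
    obtain ⟨s, hs⟩ : ∃ s : Finset α, ↑s = B \ {a} := hB.sdiff.exists_finset_coe
    have hl' : {x | x ∈ s.toList} = B \ {a} := by ext; simp [← hs]
    have hnd : (s.toList.concat a).Nodup :=
      .concat (fun h => (hl' ▸ h : a ∈ B \ {a}).2 rfl) s.nodup_toList
    have hset : {x | x ∈ s.toList.concat a} = B := by
      simp only [List.concat_eq_append, List.mem_append, List.mem_singleton, Set.ofPred_or, hl']
      simp [ha]
    refine hlist _ hnd hset ⟨s.toList.length, by simp⟩ ?_
    simpa [hs] using hacl

end ClosureOperator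

namespace SkewPoly

variable {𝔽 : Type*} [DivisionRing 𝔽] {n : ℕ}

noncomputable def pClosureOperator (S : RawMul 𝔽 n) : ClosureOperator (Set (Fin n → 𝔽)) :=
  .mk' (pClosure S) (fun _ _ h _ ha F hF => ha F fun c hc => hF c (h hc))
    (fun _ _ ha _ hF => hF _ ha) (fun _ _ ha F hF => ha F fun _ hc => hc F hF)

theorem isPBasis_iff_pIndep {S : RawMul 𝔽 n} {B Ω : Set (Fin n → 𝔽)} (hBΩ : B ⊆ Ω)
    (hgen : pClosure S B = Ω) : IsPBasis S B Ω ↔ PIndep S B :=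
  ⟨fun h => h.2.1, fun h => ⟨hBΩ, h, hgen⟩⟩

end SkewPoly

theorem stmt7_general {𝔽 : Type*} [DivisionRing 𝔽] {n : ℕ}
    (S : RawMul 𝔽 n)
    (B Ω : Set (Fin n → 𝔽)) (hBΩ : B ⊆ Ω) (hgen : pClosure S B = Ω) :
    (IsPBasis S B Ω ↔
      ∀ G : Set (Fin n → 𝔽), G ⊆ B → pClosure S G = Ω → G = B) ∧
    (B.Finite →
      (IsPBasis S B Ω ↔
        ∀ l : List (Fin n → 𝔽), l.Nodup → {x | x ∈ l} = B →
          ∀ i : Fin l.length, l.get i ∉ pClosure S {x | x ∈ l.take i.1})) := by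
  rw [isPBasis_iff_pIndep hBΩ hgen, ← hgen]
  exact ⟨(pClosureOperator S).forall_notMem_closure_diff_iff_forall_subset,
    (pClosureOperator S).forall_notMem_closure_diff_iff_forall_list⟩

/-- For `B ⊆ Ω` with `Ω = B̄`: (i) `B` is a P-basis of `Ω` iff it is a
minimal set of P-generators; (ii) if `B` is finite, these are further equivalent to: for
every ordering `b₁, …, b_M` of `B`, each `b_(i+1)` is P-independent from `{b₁, …, bᵢ}`. -/
theorem stmt7 {𝔽 : Type*} [DivisionRing 𝔽] {n : ℕ} (hn : 0 < n)
    (σ : 𝔽 → Matrix (Fin n) (Fin n) 𝔽) (δ : 𝔽 → Fin n → 𝔽)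
    (hσ : IsMatrixMorphism σ) (hδ : IsVectorDerivation σ δ)
    (S : RawMul 𝔽 n) (hS : HasCommRule S σ δ)
    (B Ω : Set (Fin n → 𝔽)) (hBΩ : B ⊆ Ω) (hgen : pClosure S B = Ω) :
    (IsPBasis S B Ω ↔
      ∀ G : Set (Fin n → 𝔽), G ⊆ B → pClosure S G = Ω → G = B) ∧
    (B.Finite →
      (IsPBasis S B Ω ↔
        ∀ l : List (Fin n → 𝔽), l.Nodup → {x | x ∈ l} = B →
          ∀ i : Fin l.length, l.get i ∉ pClosure S {x | x ∈ l.take i.1})) :=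
  stmt7_general S B Ω hBΩ hgen
end

section
/- Every finitely generated P-closed set Ω ⊆ 𝔽ⁿ admits a finite P-basis. -/
/- Common setup: free multivariate skew polynomial rings over a division ring. -/

open Matrix Finsupp

open SkewPoly

namespace SkewPoly

variable {𝔽 : Type*} [DivisionRing 𝔽] {n : ℕ} (S : RawMul 𝔽 n)

theorem subset_pClosure (A : Set (Fin n → 𝔽)) : A ⊆ pClosure S A :=
  fun _ ha _ hF => hF _ ha

theorem pClosure_subset_pClosure {A B : Set (Fin n → 𝔽)} (h : A ⊆ pClosure S B) :
    pClosure S A ⊆ pClosure S B :=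
  fun _ hc F hF => hc F fun _ ha => h ha F hF

theorem pClosure_mono {A B : Set (Fin n → 𝔽)} (h : A ⊆ B) : pClosure S A ⊆ pClosure S B :=
  pClosure_subset_pClosure S (h.trans (subset_pClosure S B))

theorem pClosure_diff_singleton_eq {B : Set (Fin n → 𝔽)} {a : Fin n → 𝔽}
    (ha : a ∈ pClosure S (B \ {a})) : pClosure S (B \ {a}) = pClosure S B := by
  refine (pClosure_mono S Set.sdiff_subset).antisymm (pClosure_subset_pClosure S fun x hx => ?_)
  by_cases hxa : x = a
  · exact hxa ▸ ha
  · exact subset_pClosure S _ ⟨hx, hxa⟩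

theorem exists_pIndep_subset_pClosure_eq (T : Finset (Fin n → 𝔽)) :
    ∃ B ⊆ T, PIndep S ↑B ∧ pClosure S ↑B = pClosure S ↑T := by
  classical
  induction T using Finset.strongInduction with
  | H T ih =>
    by_cases hT : PIndep S ↑T
    · exact ⟨T, subset_rfl, hT, rfl⟩
    obtain ⟨a, haT, ha⟩ : ∃ a ∈ T, a ∈ pClosure S (↑T \ {a}) := by
      simpa [PIndep] using hT
    obtain ⟨B, hBT, hB, hcl⟩ := ih (T.erase a) (Finset.erase_ssubset haT)
    refine ⟨B, hBT.trans (T.erase_subset a), hB, ?_⟩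
    rw [hcl, Finset.coe_erase, pClosure_diff_singleton_eq S ha]

end SkewPoly

theorem stmt8_general {𝔽 : Type*} [DivisionRing 𝔽] {n : ℕ}
    (S : RawMul 𝔽 n)
    (Ω : Set (Fin n → 𝔽)) (hfg : FinGen S Ω) :
    ∃ B : Set (Fin n → 𝔽), B.Finite ∧ IsPBasis S B Ω := by
  obtain ⟨G, hGfin, hGΩ, hGcl⟩ := hfg
  obtain ⟨B, hBG, hB, hcl⟩ := exists_pIndep_subset_pClosure_eq S hGfin.toFinset
  rw [hGfin.coe_toFinset, hGcl] at hcl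
  refine ⟨B, B.finite_toSet, fun x hx => hGΩ ?_, hB, hcl⟩
  exact hGfin.mem_toFinset.mp (hBG hx)

/-- Every finitely generated P-closed set admits a finite P-basis. -/
theorem stmt8 {𝔽 : Type*} [DivisionRing 𝔽] {n : ℕ} (hn : 0 < n)
    (σ : 𝔽 → Matrix (Fin n) (Fin n) 𝔽) (δ : 𝔽 → Fin n → 𝔽)
    (hσ : IsMatrixMorphism σ) (hδ : IsVectorDerivation σ δ)
    (S : RawMul 𝔽 n) (hS : HasCommRule S σ δ)
    (Ω : Set (Fin n → 𝔽)) (hΩ : IsPClosed S Ω) (hfg : FinGen S Ω) :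
    ∃ B : Set (Fin n → 𝔽), B.Finite ∧ IsPBasis S B Ω :=
  stmt8_general S Ω hfg
end
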